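/- Let 𝓔¹ = (E¹_1, …, E¹_k) be a partition of U, let x ∈ E¹_i, let j ≠ i, and let 𝓔² be the partition obtained from 𝓔¹ by moving x from the i-th part to the j-th part: E²_i = E¹_i \ {x}, E²_j = E¹_j ∪ {x}, and E²_p = E¹_p for all p ∉ {i, j}. If the belonging degree of x to its current hyperedge is at least its belonging degree to the alternative hyperedge (both edges taken with x included), i.e. b(x, E¹_i) ≥ b(x, E¹_j ∪ {x}), then L(𝓔¹) ≤ L(𝓔²): moving a sample away from the hyperedge of highest belonging degree cannot decrease the loss. -/

import Mathlib

open Finset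

variable {U : Type*} [Fintype U] [DecidableEq U]

/-- The belonging degree `b(x, A) = (1/l) Σ_{t=1}^l |c_t(x) ∩ A|`, where
`c_t(x) = {y ∈ U : y ~_t x}` is the equivalence class of `x` under the `t`-th
base clustering `R t`. -/
noncomputable def bdeg {l : ℕ} (R : Fin l → U → U → Prop)
    [∀ t, DecidableRel (R t)] (x : U) (A : Finset U) : ℝ :=
  (1 / (l : ℝ)) *
    ∑ t : Fin l, (((Finset.univ.filter (fun y => R t y x)) ∩ A).card : ℝ)

/-- The loss of a partition `E : Fin k → Finset U`:
`L(𝓔) = Σ_{p=1}^k Σ_{y ∈ E_p} (n - b(y, E_p))`. -/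
noncomputable def lossL {l k : ℕ} (R : Fin l → U → U → Prop)
    [∀ t, DecidableRel (R t)] (E : Fin k → Finset U) : ℝ :=
  ∑ p : Fin k, ∑ y ∈ E p, ((Fintype.card U : ℝ) - bdeg R y (E p))

/-!
For a part `A`, the sum `Σ_{y ∈ A} b(y, A)` is `1/l` times the number of ordered pairs of `A`
lying in a common class, summed over the clusterings. Adding a point `x ∉ B` to `B` adds the
pairs `(x, z)` and `(z, x)` for `z ∈ B`, plus `(x, x)` in every clustering, so this sum grows by
`2 b(x, B ∪ {x}) - 1` while `n |A|` grows by `n`. Hence moving `x` from `E_i` to `E_j` changes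
the loss by exactly `2 (b(x, E_i) - b(x, E_j ∪ {x}))`.
-/

theorem Finset.sum_sum_insert_of_symm {α β : Type*} [DecidableEq α] [AddCommMonoid β]
    {f : α → α → β} (hf : ∀ y z, f y z = f z y) {x : α} {B : Finset α} (hx : x ∉ B) :
    ∑ y ∈ insert x B, ∑ z ∈ insert x B, f y z
      = ∑ y ∈ B, ∑ z ∈ B, f y z + 2 • ∑ z ∈ B, f x z + f x x := by
  simp only [sum_insert hx, sum_add_distrib]
  rw [sum_congr rfl fun y _ => hf y x, two_nsmul]
  abel

section BelongingDegree

variable {l : ℕ} (R : Fin l → U → U → Prop) [∀ t, DecidableRel (R t)]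

theorem bdeg_eq_sum_sum_ite (x : U) (A : Finset U) :
    bdeg R x A = (1 / (l : ℝ)) * ∑ t, ∑ z ∈ A, if R t z x then 1 else 0 := by
  simp only [bdeg, filter_inter, univ_inter, natCast_card_filter]

theorem sum_bdeg_self (A : Finset U) :
    ∑ y ∈ A, bdeg R y A
      = (1 / (l : ℝ)) * ∑ t, ∑ y ∈ A, ∑ z ∈ A, if R t z y then 1 else 0 := by
  simp only [bdeg_eq_sum_sum_ite, ← mul_sum]
  rw [sum_comm]

theorem sum_bdeg_self_insert (hl : 1 ≤ l) (hR : ∀ t, Equivalence (R t)) {x : U}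
    {B : Finset U} (hx : x ∉ B) :
    ∑ y ∈ insert x B, bdeg R y (insert x B)
      = ∑ y ∈ B, bdeg R y B + 2 * bdeg R x (insert x B) - 1 := by
  have hl0 : (l : ℝ) ≠ 0 := by positivity
  have hsymm : ∀ t (y z : U),
      (if R t z y then (1 : ℝ) else 0) = if R t y z then 1 else 0 :=
    fun t y z => if_congr ⟨(hR t).symm, (hR t).symm⟩ rfl rfl
  rw [sum_bdeg_self, sum_bdeg_self,
    sum_congr rfl fun t _ => sum_sum_insert_of_symm (hsymm t) hx]
  simp only [bdeg_eq_sum_sum_ite, sum_insert hx, (hR _).refl, if_true, sum_add_distrib,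
    nsmul_eq_mul, ← mul_sum, sum_const, card_univ, Fintype.card_fin]
  field_simp
  ring

noncomputable def partLoss (A : Finset U) : ℝ :=
  ∑ y ∈ A, ((Fintype.card U : ℝ) - bdeg R y A)

theorem lossL_eq_sum_partLoss {k : ℕ} (E : Fin k → Finset U) :
    lossL R E = ∑ p, partLoss R (E p) :=
  rfl

theorem partLoss_insert (hl : 1 ≤ l) (hR : ∀ t, Equivalence (R t)) {x : U}
    {B : Finset U} (hx : x ∉ B) :
    partLoss R (insert x B)
      = partLoss R B + (Fintype.card U + 1) - 2 * bdeg R x (insert x B) := by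
  simp only [partLoss, sum_sub_distrib, sum_const, nsmul_eq_mul, card_insert_of_notMem hx,
    sum_bdeg_self_insert R hl hR hx]
  push_cast
  ring

end BelongingDegree

theorem loss_le_of_move_from_best_general {l k : ℕ} (hl : 1 ≤ l)
    (R : Fin l → U → U → Prop) [∀ t, DecidableRel (R t)]
    (hR : ∀ t, Equivalence (R t))
    (E1 : Fin k → Finset U)
    (hdisj : ∀ p q, p ≠ q → Disjoint (E1 p) (E1 q))
    (x : U) (i j : Fin k) (hx : x ∈ E1 i) (hij : j ≠ i)
    (E2 : Fin k → Finset U)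
    (hE2i : E2 i = (E1 i).erase x)
    (hE2j : E2 j = insert x (E1 j))
    (hE2 : ∀ p, p ≠ i → p ≠ j → E2 p = E1 p)
    (hbest : bdeg R x (insert x (E1 j)) ≤ bdeg R x (E1 i)) :
    lossL R E1 ≤ lossL R E2 := by
  have hxj : x ∉ E1 j := disjoint_left.mp (hdisj i j hij.symm) hx
  have hi := partLoss_insert R hl hR (notMem_erase x (E1 i))
  rw [insert_erase hx] at hi
  have hj := partLoss_insert R hl hR hxj
  have hdiff : lossL R E2 - lossL R E1
      = (partLoss R (E2 i) - partLoss R (E1 i)) + (partLoss R (E2 j) - partLoss R (E1 j)) := by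
    rw [lossL_eq_sum_partLoss, lossL_eq_sum_partLoss, ← sum_sub_distrib]
    exact Fintype.sum_eq_add i j hij.symm fun p ⟨hpi, hpj⟩ => by rw [hE2 p hpi hpj, sub_self]
  rw [hE2i, hE2j] at hdiff
  linarith

/-- If `b(x, E¹_i) ≥ b(x, E¹_j ∪ {x})`, then moving `x` from the `i`-th part
to the `j`-th part cannot decrease the loss: `L(𝓔¹) ≤ L(𝓔²)`. -/
theorem loss_le_of_move_from_best {l k : ℕ} (hl : 1 ≤ l)
    (R : Fin l → U → U → Prop) [∀ t, DecidableRel (R t)]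
    (hR : ∀ t, Equivalence (R t))
    (E1 : Fin k → Finset U)
    (hdisj : ∀ p q, p ≠ q → Disjoint (E1 p) (E1 q))
    (hcover : (Finset.univ : Finset (Fin k)).biUnion E1 = Finset.univ)
    (x : U) (i j : Fin k) (hx : x ∈ E1 i) (hij : j ≠ i)
    (E2 : Fin k → Finset U)
    (hE2i : E2 i = (E1 i).erase x)
    (hE2j : E2 j = insert x (E1 j))
    (hE2 : ∀ p, p ≠ i → p ≠ j → E2 p = E1 p)
    (hbest : bdeg R x (insert x (E1 j)) ≤ bdeg R x (E1 i)) :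
    lossL R E1 ≤ lossL R E2 :=
  loss_le_of_move_from_best_general hl R hR E1 hdisj x i j hx hij E2 hE2i hE2j hE2 hbest
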